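/- arXiv:1409.7011 — 2 statements merged into one kernel-verified Lean document; each statement's English description precedes it below -/
import Mathlib

section
/- The vertex operators Γ_{+1}(a) and Γ_{+1}(b) commute: Γ_{+1}(a)Γ_{+1}(b) = Γ_{+1}(b)Γ_{+1}(a); equivalently, for all partitions μ, τ, Σ_{ρ: μ ≻ ρ ≻ τ} a^{|μ|-|ρ|} b^{|ρ|-|τ|} = Σ_{ρ: μ ≻ ρ ≻ τ} b^{|μ|-|ρ|} a^{|ρ|-|τ|}. -/
/-- A partition: a non-increasing, eventually-zero sequence of non-negative integers. -/
structure Ptn where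
  f : ℕ → ℕ
  anti : ∀ i, f (i + 1) ≤ f i
  ev : ∃ N, ∀ i, N ≤ i → f i = 0

/-- The size `|ρ|` of a partition: the number of boxes. -/
noncomputable def Ptn.size (ρ : Ptn) : ℕ := ∑ᶠ i, ρ.f i

/-- The set `S(ρ) = {ρ_i - (i+1) : i ≥ 0} ⊆ ℤ`. -/
def Ptn.S (ρ : Ptn) : Set ℤ := {t | ∃ i : ℕ, t = (ρ.f i : ℤ) - (i + 1)}

/-- The conjugate partition: `ρ'_j = #{i : ρ_i > j}`. -/
noncomputable def Ptn.conj (ρ : Ptn) (j : ℕ) : ℕ := Set.ncard {i : ℕ | j < ρ.f i}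

/-- The interlacing relation `τ ≻ σ`: `τ_0 ≥ σ_0 ≥ τ_1 ≥ σ_1 ≥ ...`. -/
def Interlace (τ σ : Ptn) : Prop := ∀ i, σ.f i ≤ τ.f i ∧ τ.f (i + 1) ≤ σ.f i

/-- The set of boxes of a partition (row, column), 0-indexed. -/
def Ptn.cells (ρ : Ptn) : Set (ℕ × ℕ) := {p | p.2 < ρ.f p.1}

namespace GammaAux

lemma Ptn.ext' {a b : Ptn} (h : a.f = b.f) : a = b := by
  cases a; cases b; simp_all

/-- Upper bound of the interval for `ρ_i`. -/
def U (μ τ : Ptn) : ℕ → ℕ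
  | 0 => μ.f 0
  | (j+1) => min (μ.f (j+1)) (τ.f j)

/-- Lower bound of the interval for `ρ_i`. -/
def L (μ τ : Ptn) (i : ℕ) : ℕ := max (μ.f (i+1)) (τ.f i)

variable {μ τ ρ : Ptn}

lemma L_le (h1 : Interlace μ ρ) (h2 : Interlace ρ τ) (i : ℕ) :
    L μ τ i ≤ ρ.f i := max_le (h1 i).2 (h2 i).1

lemma le_U (h1 : Interlace μ ρ) (h2 : Interlace ρ τ) (i : ℕ) :
    ρ.f i ≤ U μ τ i := by
  cases i with
  | zero => exact (h1 0).1
  | succ j => exact le_min (h1 (j+1)).1 (h2 j).2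

lemma L_le_U (h1 : Interlace μ ρ) (h2 : Interlace ρ τ) (i : ℕ) :
    L μ τ i ≤ U μ τ i := (L_le h1 h2 i).trans (le_U h1 h2 i)

/-- The reflection map on sequences. -/
def rf (μ τ ρ : Ptn) (i : ℕ) : ℕ := L μ τ i + (U μ τ i - ρ.f i)

lemma L_le_rf (i : ℕ) : L μ τ i ≤ rf μ τ ρ i := Nat.le_add_right _ _

lemma rf_le_U (h1 : Interlace μ ρ) (h2 : Interlace ρ τ) (i : ℕ) :
    rf μ τ ρ i ≤ U μ τ i := by
  have hL := L_le h1 h2 i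
  have hU := le_U h1 h2 i
  unfold rf; omega

lemma U_succ_le_L (μ τ : Ptn) (i : ℕ) : U μ τ (i+1) ≤ L μ τ i :=
  le_trans (min_le_left _ _) (le_max_left _ _)

lemma rf_add (h1 : Interlace μ ρ) (h2 : Interlace ρ τ) (i : ℕ) :
    rf μ τ ρ i + ρ.f i = L μ τ i + U μ τ i := by
  have := le_U h1 h2 i; unfold rf; omega

/-- The reflected partition. -/
def reflPtn (μ τ ρ : Ptn) (h1 : Interlace μ ρ) (h2 : Interlace ρ τ) : Ptn where
  f := rf μ τ ρ
  anti := fun i => le_trans (rf_le_U h1 h2 (i+1)) (le_trans (U_succ_le_L μ τ i) (L_le_rf i))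
  ev := by
    obtain ⟨Nμ, hNμ⟩ := μ.ev
    obtain ⟨Nτ, hNτ⟩ := τ.ev
    refine ⟨Nμ + Nτ + 1, fun i hi => ?_⟩
    obtain ⟨j, rfl⟩ : ∃ j, i = j + 1 := ⟨i - 1, by omega⟩
    have h1 : μ.f (j+1) = 0 := hNμ _ (by omega)
    have h2 : τ.f j = 0 := hNτ _ (by omega)
    have h3 : μ.f (j+2) = 0 := hNμ _ (by omega)
    have h4 : τ.f (j+1) = 0 := hNτ _ (by omega)
    simp [rf, U, L, h1, h2, h3, h4]

lemma refl_interlace₁ (h1 : Interlace μ ρ) (h2 : Interlace ρ τ) :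
    Interlace μ (reflPtn μ τ ρ h1 h2) := by
  intro i
  constructor
  · refine (rf_le_U h1 h2 i).trans ?_
    cases i with
    | zero => exact le_refl _
    | succ j => exact min_le_left _ _
  · exact le_trans (le_max_left _ _) (L_le_rf i)

lemma refl_interlace₂ (h1 : Interlace μ ρ) (h2 : Interlace ρ τ) :
    Interlace (reflPtn μ τ ρ h1 h2) τ := by
  intro i
  constructor
  · exact le_trans (le_max_right _ _) (L_le_rf i)
  · exact le_trans (rf_le_U h1 h2 (i+1)) (min_le_right _ _)

lemma refl_invol (h1 : Interlace μ ρ) (h2 : Interlace ρ τ)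
    (h1' : Interlace μ (reflPtn μ τ ρ h1 h2)) (h2' : Interlace (reflPtn μ τ ρ h1 h2) τ) :
    reflPtn μ τ (reflPtn μ τ ρ h1 h2) h1' h2' = ρ := by
  apply Ptn.ext'
  funext i
  show rf μ τ (reflPtn μ τ ρ h1 h2) i = ρ.f i
  have hA := rf_add h1 h2 i
  have hB := le_U h1 h2 i
  have hC := L_le h1 h2 i
  show L μ τ i + (U μ τ i - rf μ τ ρ i) = ρ.f i
  unfold rf at *
  omega

/-- finite-sum version of size. -/
lemma size_eq_sum {ρ : Ptn} {N : ℕ} (h : ∀ i, N ≤ i → ρ.f i = 0) :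
    ρ.size = ∑ i ∈ Finset.range N, ρ.f i := by
  apply finsum_eq_sum_of_support_subset
  intro i hi
  simp only [Function.mem_support] at hi
  simp only [Finset.coe_range, Set.mem_Iio]
  by_contra hc
  exact hi (h i (by omega))

lemma sum_LU (μ τ : Ptn) {N : ℕ} (hμ : μ.f N = 0) :
    ∑ i ∈ Finset.range N, (L μ τ i + U μ τ i)
      = ∑ i ∈ Finset.range N, μ.f i + ∑ i ∈ Finset.range N, τ.f i := by
  cases N with
  | zero => simp
  | succ M =>
    have hU : ∑ i ∈ Finset.range (M+1), U μ τ i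
        = μ.f 0 + ∑ i ∈ Finset.range M, min (μ.f (i+1)) (τ.f i) := by
      rw [Finset.sum_range_succ' (U μ τ) M]
      simp [U, add_comm]
    have hmin : ∑ i ∈ Finset.range M, min (μ.f (i+1)) (τ.f i)
        = ∑ i ∈ Finset.range (M+1), min (μ.f (i+1)) (τ.f i) := by
      rw [Finset.sum_range_succ, hμ]; simp
    have hmax : ∀ i ∈ Finset.range (M+1),
        max (μ.f (i+1)) (τ.f i) + min (μ.f (i+1)) (τ.f i) = μ.f (i+1) + τ.f i := by
      intro i _; exact max_add_min _ _
    calc ∑ i ∈ Finset.range (M+1), (L μ τ i + U μ τ i)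
        = ∑ i ∈ Finset.range (M+1), L μ τ i + ∑ i ∈ Finset.range (M+1), U μ τ i :=
          Finset.sum_add_distrib
      _ = μ.f 0 + ∑ i ∈ Finset.range (M+1),
            (max (μ.f (i+1)) (τ.f i) + min (μ.f (i+1)) (τ.f i)) := by
          rw [hU, hmin, Finset.sum_add_distrib]; unfold L; ring
      _ = μ.f 0 + ∑ i ∈ Finset.range (M+1), (μ.f (i+1) + τ.f i) := by
          rw [Finset.sum_congr rfl hmax]
      _ = (∑ i ∈ Finset.range (M+1), μ.f (i+1) + μ.f 0)
            + ∑ i ∈ Finset.range (M+1), τ.f i := by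
          rw [Finset.sum_add_distrib]; ring
      _ = ∑ i ∈ Finset.range (M+2), μ.f i + ∑ i ∈ Finset.range (M+1), τ.f i := by
          rw [Finset.sum_range_succ' μ.f (M+1)]
      _ = ∑ i ∈ Finset.range (M+1), μ.f i + ∑ i ∈ Finset.range (M+1), τ.f i := by
          rw [Finset.sum_range_succ μ.f (M+1), hμ, add_zero]

lemma ptn_anti_le (ρ : Ptn) {i j : ℕ} (h : i ≤ j) : ρ.f j ≤ ρ.f i := by
  induction j with
  | zero => cases Nat.le_zero.mp h; exact le_refl _
  | succ k ih =>
    rcases Nat.eq_or_lt_of_le h with rfl | hlt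
    · exact le_refl _
    · exact le_trans (ρ.anti k) (ih (by omega))

lemma size_refl (h1 : Interlace μ ρ) (h2 : Interlace ρ τ) :
    (reflPtn μ τ ρ h1 h2).size + ρ.size = μ.size + τ.size := by
  obtain ⟨Nμ, hNμ⟩ := μ.ev
  obtain ⟨Nτ, hNτ⟩ := τ.ev
  set N := max Nμ Nτ + 1 with hN
  have hμ0 : ∀ i, N ≤ i → μ.f i = 0 := fun i hi => hNμ i (by omega)
  have hτ0 : ∀ i, N ≤ i → τ.f i = 0 := fun i hi => hNτ i (by omega)
  have hρ0 : ∀ i, N ≤ i → ρ.f i = 0 := fun i hi =>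
    Nat.le_zero.mp ((h1 i).1.trans_eq (hμ0 i hi))
  have hr0 : ∀ i, N ≤ i → (reflPtn μ τ ρ h1 h2).f i = 0 := fun i hi =>
    Nat.le_zero.mp (((refl_interlace₁ h1 h2) i).1.trans_eq (hμ0 i hi))
  rw [size_eq_sum hμ0, size_eq_sum hτ0, size_eq_sum hρ0, size_eq_sum hr0,
    ← Finset.sum_add_distrib, ← Finset.sum_add_distrib]
  calc ∑ i ∈ Finset.range N, ((reflPtn μ τ ρ h1 h2).f i + ρ.f i)
      = ∑ i ∈ Finset.range N, (L μ τ i + U μ τ i) :=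
        Finset.sum_congr rfl (fun i _ => rf_add h1 h2 i)
    _ = ∑ i ∈ Finset.range N, μ.f i + ∑ i ∈ Finset.range N, τ.f i :=
        sum_LU μ τ (hμ0 N le_rfl)
    _ = ∑ i ∈ Finset.range N, (μ.f i + τ.f i) := Finset.sum_add_distrib.symm

noncomputable def theEquiv (μ τ : Ptn) (m n : ℕ) :
    {ρ : Ptn // Interlace μ ρ ∧ Interlace ρ τ ∧ ρ.size + m = μ.size ∧ τ.size + n = ρ.size} ≃
    {ρ : Ptn // Interlace μ ρ ∧ Interlace ρ τ ∧ ρ.size + n = μ.size ∧ τ.size + m = ρ.size} where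
  toFun x := ⟨reflPtn μ τ x.1 x.2.1 x.2.2.1, refl_interlace₁ x.2.1 x.2.2.1,
      refl_interlace₂ x.2.1 x.2.2.1, by
        have hs := size_refl x.2.1 x.2.2.1
        have h := x.2.2.2
        omega, by
        have hs := size_refl x.2.1 x.2.2.1
        have h := x.2.2.2
        omega⟩
  invFun x := ⟨reflPtn μ τ x.1 x.2.1 x.2.2.1, refl_interlace₁ x.2.1 x.2.2.1,
      refl_interlace₂ x.2.1 x.2.2.1, by
        have hs := size_refl x.2.1 x.2.2.1
        have h := x.2.2.2
        omega, by
        have hs := size_refl x.2.1 x.2.2.1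
        have h := x.2.2.2
        omega⟩
  left_inv x := Subtype.ext
    (refl_invol x.2.1 x.2.2.1 (refl_interlace₁ x.2.1 x.2.2.1) (refl_interlace₂ x.2.1 x.2.2.1))
  right_inv x := Subtype.ext
    (refl_invol x.2.1 x.2.2.1 (refl_interlace₁ x.2.1 x.2.2.1) (refl_interlace₂ x.2.1 x.2.2.1))

end GammaAux

/-- `Γ₊(a)` and `Γ₊(b)` commute: for fixed partitions `μ, τ`, the
two-variable generating function `Σ_{ρ : μ ≻ ρ ≻ τ} a^{|μ|-|ρ|} b^{|ρ|-|τ|}` is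
symmetric in `a` and `b`, stated coefficient-wise. -/
theorem gamma_plus_commute (μ τ : Ptn) (m n : ℕ) :
    Nat.card {ρ : Ptn // Interlace μ ρ ∧ Interlace ρ τ ∧
        ρ.size + m = μ.size ∧ τ.size + n = ρ.size}
      = Nat.card {ρ : Ptn // Interlace μ ρ ∧ Interlace ρ τ ∧
        ρ.size + n = μ.size ∧ τ.size + m = ρ.size} :=
  Nat.card_congr (GammaAux.theEquiv μ τ m n)
end

section
/- Adding a single box in position (i,j) to the component λ_k of the n-quotient of λ̄ corresponds to adding a border strip of length n to λ̄; this border strip contains exactly one box of each color (where box (r,s) of λ̄ has color s - r mod n), its northeastern-most box has color k, and its unique box of color 0 lies on the diagonal s - r = n(j - i). -/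
/-- The interlaced-slope-sequence condition: `Λ̄(t) = λ_{t mod n}((t - t mod n)/n)`,
i.e. `(λ_0, ..., λ_{n-1})` is the `n`-quotient of `Λ`. -/
def SlopeQuot (n : ℕ) (lam : ℕ → Ptn) (Λ : Ptn) : Prop :=
  ∀ t : ℤ, t ∈ Λ.S ↔ t.ediv n ∈ (lam (t.emod n).toNat).S

/-- The number of boxes of `Λ` of color `c`, where box `(i,j)` has color `(j - i) mod n`. -/
noncomputable def colorCount (n : ℕ) (Λ : Ptn) (c : ℤ) : ℕ :=
  ∑ᶠ i : ℕ, ((Finset.range (Λ.f i)).filter (fun j : ℕ => ((j : ℤ) - (i : ℤ)).emod n = c)).card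

/-- `Λ` is balanced: it has the same number of boxes of each color mod `n`. -/
def BalancedPtn (n : ℕ) (Λ : Ptn) : Prop :=
  ∀ c c' : ℤ, colorCount n Λ c = colorCount n Λ c'

/-- Two boxes are adjacent if they share an edge. -/
def Adj (a b : ℕ × ℕ) : Prop :=
  (a.1 = b.1 ∧ (a.2 + 1 = b.2 ∨ b.2 + 1 = a.2)) ∨
  (a.2 = b.2 ∧ (a.1 + 1 = b.1 ∨ b.1 + 1 = a.1))

/-- A set of boxes is connected (via edge-adjacency, through the set). -/
def ConnectedBoxes (D : Set (ℕ × ℕ)) : Prop :=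
  ∀ a ∈ D, ∀ b ∈ D, Relation.ReflTransGen (fun x y => y ∈ D ∧ Adj x y) a b

/-- A set of boxes contains no 2×2 square. -/
def No2x2 (D : Set (ℕ × ℕ)) : Prop :=
  ¬ ∃ r s : ℕ, (r, s) ∈ D ∧ (r + 1, s) ∈ D ∧ (r, s + 1) ∈ D ∧ (r + 1, s + 1) ∈ D

/-- A border strip with `n` boxes: a finite connected set of `n` boxes with no 2×2 square. -/
def IsBorderStrip (n : ℕ) (D : Set (ℕ × ℕ)) : Prop :=
  D.Finite ∧ D.ncard = n ∧ ConnectedBoxes D ∧ No2x2 D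

/-- The height of a strip: the number of rows it occupies, minus one. -/
noncomputable def htS (D : Set (ℕ × ℕ)) : ℕ := Set.ncard {r | ∃ s, (r, s) ∈ D} - 1

/-!
Write `S(ρ)` as the set of beta numbers `ρ_r - (r + 1)`. A cell `(r, s)` lies in `ρ` iff more
than `r` beta numbers are `≥ s - r`, so on each diagonal `d` the cells of `ρ` are an initial
segment whose length is read off from `#{t ∈ S(ρ) | d ≤ t}`. Adding a box in row `i` of `λ_k`
moves the bead `m = λ_{k,i} - i - 1` of `S(λ_k)` to the empty position `m + 1`; through the
quotient this moves the bead `a = n m + k` of `S(Λ)` to the empty position `a + n`. Hence the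
count grows by one exactly on the diagonals `a < d ≤ a + n`, and the new cells are the first
cells outside `Λ` on these `n` consecutive diagonals: consecutive ones are adjacent, no two
share a diagonal (so there is no `2 × 2` square), their colors `d mod n` are all distinct, the
northeastern one lies on the diagonal `a + n ≡ k`, and the diagonal `n (m + 1) = n (j - i)`
is among them.
-/

lemma ncard_insert_sdiff_inter_Ici {α : Type*} [LinearOrder α] {S : Set α} {a b x : α}
    (ha : a ∈ S) (hb : b ∉ S) (hab : a ≤ b) (hfin : (S ∩ Set.Ici x).Finite) :
    (insert b (S \ {a}) ∩ Set.Ici x).ncard =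
      (S ∩ Set.Ici x).ncard + if a < x ∧ x ≤ b then 1 else 0 := by
  have hb' : b ∉ S ∩ Set.Ici x := fun h => hb h.1
  by_cases hxa : x ≤ a
  · have hset : insert b (S \ {a}) ∩ Set.Ici x = insert b ((S ∩ Set.Ici x) \ {a}) := by
      ext t
      simp only [Set.mem_inter_iff, Set.mem_insert_iff, Set.mem_sdiff, Set.mem_singleton_iff,
        Set.mem_Ici]
      grind
    rw [if_neg (by grind), hset,
      Set.ncard_insert_of_notMem (Set.notMem_subset Set.sdiff_subset hb') hfin.sdiff,
      Set.ncard_sdiff_singleton_add_one (show a ∈ S ∩ Set.Ici x from ⟨ha, hxa⟩) hfin, add_zero]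
  by_cases hxb : x ≤ b
  · have hset : insert b (S \ {a}) ∩ Set.Ici x = insert b (S ∩ Set.Ici x) := by
      ext t
      simp only [Set.mem_inter_iff, Set.mem_insert_iff, Set.mem_sdiff, Set.mem_singleton_iff,
        Set.mem_Ici]
      grind
    rw [if_pos ⟨not_le.mp hxa, hxb⟩, hset, Set.ncard_insert_of_notMem hb' hfin]
  · have hset : insert b (S \ {a}) ∩ Set.Ici x = S ∩ Set.Ici x := by
      ext t
      simp only [Set.mem_inter_iff, Set.mem_insert_iff, Set.mem_sdiff, Set.mem_singleton_iff,
        Set.mem_Ici]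
      grind
    rw [if_neg (by grind), hset, add_zero]

lemma existsUnique_mem_Ioc_emod_eq {n : ℤ} (hn : 0 < n) (a : ℤ) {c : ℤ} (hc₀ : 0 ≤ c)
    (hcn : c < n) : ∃! d, d ∈ Set.Ioc a (a + n) ∧ d % n = c := by
  have hr₀ : 0 ≤ (a - c) % n := Int.emod_nonneg _ hn.ne'
  have hrn : (a - c) % n < n := Int.emod_lt_of_pos _ hn
  set d := a + n - (a - c) % n
  have hd : d % n = c := by
    have hdiv := Int.mul_ediv_add_emod (a - c) n
    rw [show d = c + n * ((a - c) / n + 1) by linarith, Int.add_mul_emod_self_left,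
      Int.emod_eq_of_lt hc₀ hcn]
  refine ⟨d, ⟨⟨by omega, by omega⟩, hd⟩, ?_⟩
  rintro e ⟨⟨hae, hea⟩, he⟩
  have hmod : e ≡ d [ZMOD n] := he.trans hd.symm
  have := Int.eq_zero_of_abs_lt_dvd hmod.dvd (abs_sub_lt_iff.mpr ⟨by omega, by omega⟩)
  omega

lemma adj_comm {p q : ℕ × ℕ} : Adj p q ↔ Adj q p := by
  unfold Adj
  tauto

lemma connectedBoxes_image_Ioc {f : ℤ → ℕ × ℕ} (hf : ∀ d, Adj (f d) (f (d + 1))) (a b : ℤ) :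
    ConnectedBoxes (f '' Set.Ioc a b) := by
  set D := f '' Set.Ioc a b
  let R : ℕ × ℕ → ℕ × ℕ → Prop := fun p q => p ∈ D ∧ q ∈ D ∧ Adj p q
  have : Std.Symm R := ⟨fun _ _ ⟨hp, hq, h⟩ => ⟨hq, hp, adj_comm.mp h⟩⟩
  have hchain : ∀ d ∈ Set.Ioc a b, ∀ e, d ≤ e → e ≤ b → Relation.ReflTransGen R (f d) (f e) := by
    intro d hd e hde
    induction e, hde using Int.leInduction with
    | base => exact fun _ => .refl
    | succ e hde ih =>
      intro heb
      exact (ih (by omega)).tail ⟨⟨e, ⟨by grind, by omega⟩, rfl⟩,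
        ⟨e + 1, ⟨by grind, heb⟩, rfl⟩, hf e⟩
  rintro _ ⟨d, hd, rfl⟩ _ ⟨e, he, rfl⟩
  refine Relation.ReflTransGen.mono (fun p q (h : R p q) => ⟨h.2.1, h.2.2⟩) _ _ ?_
  rcases le_total d e with hde | hed
  · exact hchain d hd e hde he.2
  · exact Std.Symm.symm _ _ (hchain e he d hed hd.2)

namespace Ptn

variable (ρ : Ptn)

def beta (r : ℕ) : ℤ := ρ.f r - (r + 1)

lemma beta_strictAnti : StrictAnti ρ.beta :=
  strictAnti_nat_of_succ_lt fun r => by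
    have := ρ.anti r
    simp only [beta]
    omega

lemma S_eq_range_beta : ρ.S = Set.range ρ.beta := by
  ext t
  exact exists_congr fun _ => eq_comm

lemma beta_mem_S (r : ℕ) : ρ.beta r ∈ ρ.S := ⟨r, rfl⟩

noncomputable def countGe (x : ℤ) : ℕ := (ρ.S ∩ Set.Ici x).ncard

lemma preimage_beta_Ici (x : ℤ) : ρ.beta ⁻¹' Set.Ici x = Set.Iio (ρ.countGe x) := by
  have hlower : IsLowerSet (ρ.beta ⁻¹' Set.Ici x) := fun r s hsr hr =>
    le_trans hr (ρ.beta_strictAnti.antitone hsr)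
  obtain huniv | ⟨m, hm⟩ := hlower.eq_univ_or_Iio
  · have hr := huniv ▸ Set.mem_univ ((ρ.f 0 : ℤ) - x).toNat
    have := antitone_nat_of_succ_le ρ.anti (Nat.zero_le ((ρ.f 0 : ℤ) - x).toNat)
    simp only [Set.mem_preimage, Set.mem_Ici, beta] at hr this
    omega
  · rw [countGe, S_eq_range_beta, ← Set.image_preimage_eq_range_inter, hm,
      Set.ncard_image_of_injective _ ρ.beta_strictAnti.injective, Set.ncard_Iio_nat]

lemma lt_countGe_iff {r : ℕ} {x : ℤ} : r < ρ.countGe x ↔ x ≤ ρ.beta r := by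
  rw [← Set.mem_Iio, ← preimage_beta_Ici]
  rfl

lemma mem_cells_iff {p : ℕ × ℕ} : p ∈ ρ.cells ↔ p.1 < ρ.countGe ((p.2 : ℤ) - p.1) := by
  rw [lt_countGe_iff]
  simp only [cells, beta, Set.mem_ofPred_eq]
  omega

lemma finite_S_inter_Ici (x : ℤ) : (ρ.S ∩ Set.Ici x).Finite := by
  rw [S_eq_range_beta, ← Set.image_preimage_eq_range_inter, preimage_beta_Ici]
  exact (Set.finite_Iio _).image _

lemma countGe_antitone : Antitone ρ.countGe := fun x y hxy =>
  Set.Iio_subset_Iio_iff.mp <| by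
    rw [← preimage_beta_Ici, ← preimage_beta_Ici]
    exact Set.preimage_mono (Set.Ici_subset_Ici.mpr hxy)

lemma countGe_le_countGe_add_one (x : ℤ) : ρ.countGe x ≤ ρ.countGe (x + 1) + 1 := by
  by_contra! h
  rw [lt_countGe_iff] at h
  have hlt := ρ.beta_strictAnti (Nat.lt_add_one (ρ.countGe (x + 1)))
  exact lt_irrefl _ (ρ.lt_countGe_iff.mpr (by omega : x + 1 ≤ ρ.beta (ρ.countGe (x + 1))))

lemma neg_le_countGe (x : ℤ) : -x ≤ ρ.countGe x := by
  rcases lt_or_ge x 0 with hx | hx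
  · have : (-x - 1).toNat < ρ.countGe x := ρ.lt_countGe_iff.mpr (by simp only [beta]; omega)
    omega
  · omega

lemma add_countGe_monotone : Monotone fun x => x + (ρ.countGe x : ℤ) :=
  monotone_int_of_le_succ fun x => by
    have := ρ.countGe_le_countGe_add_one x
    omega

/-- The first cell on the diagonal `d` (column minus row equal to `d`) outside `ρ`. -/
noncomputable def outerCell (d : ℤ) : ℕ × ℕ := (ρ.countGe d, (d + ρ.countGe d).toNat)

lemma outerCell_sub (d : ℤ) : ((ρ.outerCell d).2 : ℤ) - (ρ.outerCell d).1 = d := by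
  have := ρ.neg_le_countGe d
  simp only [outerCell]
  omega

lemma outerCell_injective : Function.Injective ρ.outerCell := fun d e h => by
  rw [← ρ.outerCell_sub d, h, ρ.outerCell_sub]

lemma eq_outerCell_iff {p : ℕ × ℕ} :
    p = ρ.outerCell ((p.2 : ℤ) - p.1) ↔ p.1 = ρ.countGe ((p.2 : ℤ) - p.1) := by
  refine ⟨fun h => by rw [h, outerCell_sub]; rfl, fun h => Prod.ext h ?_⟩
  simp only [outerCell, ← h]
  omega

lemma adj_outerCell_add_one (d : ℤ) : Adj (ρ.outerCell d) (ρ.outerCell (d + 1)) := by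
  have hle := ρ.countGe_le_countGe_add_one d
  have hge := ρ.countGe_antitone (le_add_of_nonneg_right zero_le_one : d ≤ d + 1)
  have h₀ := ρ.neg_le_countGe d
  have h₁ := ρ.neg_le_countGe (d + 1)
  simp only [Adj, outerCell]
  omega

lemma outerCell_northeast {d e : ℤ} (hde : d ≤ e) :
    (ρ.outerCell e).1 ≤ (ρ.outerCell d).1 ∧ (ρ.outerCell d).2 ≤ (ρ.outerCell e).2 :=
  ⟨ρ.countGe_antitone hde, Int.toNat_le_toNat (ρ.add_countGe_monotone hde)⟩

lemma no2x2_image_outerCell (A : Set ℤ) : No2x2 (ρ.outerCell '' A) := by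
  rintro ⟨r, s, ⟨d, -, hd⟩, -, -, ⟨e, -, he⟩⟩
  have hde : d = e := by
    rw [← ρ.outerCell_sub d, ← ρ.outerCell_sub e, hd, he]
    push_cast
    ring
  subst hde
  have := congrArg Prod.fst (hd.symm.trans he)
  omega

lemma existsUnique_mem_image_outerCell {A : Set ℤ} {P : ℤ → Prop} (h : ∃! d, d ∈ A ∧ P d) :
    ∃! p, p ∈ ρ.outerCell '' A ∧ P ((p.2 : ℤ) - p.1) := by
  obtain ⟨d, ⟨hdA, hd⟩, huniq⟩ := h
  refine ⟨ρ.outerCell d, ⟨Set.mem_image_of_mem _ hdA, by rwa [outerCell_sub]⟩, ?_⟩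
  rintro _ ⟨⟨e, heA, rfl⟩, he⟩
  rw [outerCell_sub] at he
  rw [huniq e ⟨heA, he⟩]

section AddBox

variable {ρ' : Ptn} {i : ℕ}

lemma S_eq_insert_sdiff_of_add_one (hi : ρ'.f i = ρ.f i + 1) (hrow : ∀ r ≠ i, ρ'.f r = ρ.f r) :
    ρ'.S = insert (ρ.beta i + 1) (ρ.S \ {ρ.beta i}) := by
  have hbi : ρ'.beta i = ρ.beta i + 1 := by
    simp only [beta, hi]
    push_cast
    ring
  have hbr : ∀ r ≠ i, ρ'.beta r = ρ.beta r := fun r hr => by simp only [beta, hrow r hr]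
  ext t
  simp only [S_eq_range_beta, Set.mem_insert_iff, Set.mem_sdiff, Set.mem_range,
    Set.mem_singleton_iff]
  constructor
  · rintro ⟨r, rfl⟩
    by_cases hr : r = i
    · exact .inl (hr ▸ hbi)
    · rw [hbr r hr]
      exact .inr ⟨⟨r, rfl⟩, fun h => hr (ρ.beta_strictAnti.injective h)⟩
  · rintro (rfl | ⟨⟨r, rfl⟩, hne⟩)
    · exact ⟨i, hbi⟩
    · exact ⟨r, hbr r fun h => hne (h ▸ rfl)⟩

lemma beta_add_one_notMem_S (hi : ρ'.f i = ρ.f i + 1) (hrow : ∀ r ≠ i, ρ'.f r = ρ.f r) :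
    ρ.beta i + 1 ∉ ρ.S := by
  rintro ⟨r, hr⟩
  have hri : r ≠ i := by
    rintro rfl
    simp only [beta] at hr
    omega
  have : ρ'.beta r = ρ'.beta i := by
    simp only [beta, hrow r hri, hi] at hr ⊢
    push_cast
    omega
  exact hri (ρ'.beta_strictAnti.injective this)

end AddBox

section MoveBead

variable {ρ' : Ptn} {a b : ℤ}

lemma countGe_of_S_eq (ha : a ∈ ρ.S) (hb : b ∉ ρ.S) (hab : a ≤ b)
    (hS : ρ'.S = insert b (ρ.S \ {a})) (x : ℤ) :
    ρ'.countGe x = ρ.countGe x + if a < x ∧ x ≤ b then 1 else 0 := by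
  rw [countGe, hS, ncard_insert_sdiff_inter_Ici ha hb hab (ρ.finite_S_inter_Ici x), countGe]

lemma cells_sdiff_eq_image (ha : a ∈ ρ.S) (hb : b ∉ ρ.S) (hab : a ≤ b)
    (hS : ρ'.S = insert b (ρ.S \ {a})) : ρ'.cells \ ρ.cells = ρ.outerCell '' Set.Ioc a b := by
  ext p
  rw [Set.mem_sdiff, mem_cells_iff, mem_cells_iff, ρ.countGe_of_S_eq ha hb hab hS, Set.mem_image]
  constructor
  · rintro ⟨hin, hout⟩
    split_ifs at hin with hd
    · exact ⟨_, hd, ((ρ.eq_outerCell_iff).mpr (by omega)).symm⟩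
    · omega
  · rintro ⟨d, hd, rfl⟩
    rw [outerCell_sub, if_pos (show a < d ∧ d ≤ b from hd)]
    simp only [outerCell]
    omega

end MoveBead

end Ptn

lemma Int.mul_add_emod_of_lt {n l : ℕ} (hl : l < n) (q : ℤ) : ((n : ℤ) * q + l) % n = l := by
  rw [add_comm, Int.add_mul_emod_self_left, Int.emod_eq_of_lt (Int.natCast_nonneg l)
    (Int.ofNat_lt.mpr hl)]

lemma Int.mul_add_ediv_of_lt {n l : ℕ} (hl : l < n) (q : ℤ) : ((n : ℤ) * q + l) / n = q := by
  rw [add_comm, Int.add_mul_ediv_left _ _ (by omega), Int.ediv_eq_zero_of_lt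
    (Int.natCast_nonneg l) (Int.ofNat_lt.mpr hl), zero_add]

namespace SlopeQuot

variable {n k : ℕ} {lam lam' : ℕ → Ptn} {Λ Λ' : Ptn}

lemma mem_S_iff (hq : SlopeQuot n lam Λ) (hk : k < n) (q : ℤ) :
    (n : ℤ) * q + k ∈ Λ.S ↔ q ∈ (lam k).S := by
  rw [hq]
  change (n * q + k) / (n : ℤ) ∈ (lam ((n * q + k) % (n : ℤ)).toNat).S ↔ _
  rw [Int.mul_add_emod_of_lt hk, Int.mul_add_ediv_of_lt hk, Int.toNat_natCast]

lemma S_eq_insert_sdiff (hq : SlopeQuot n lam Λ) (hq' : SlopeQuot n lam' Λ') (hk : k < n)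
    (hcomp : ∀ l ≠ k, lam' l = lam l) {m : ℤ}
    (hS : (lam' k).S = insert (m + 1) ((lam k).S \ {m})) :
    Λ'.S = insert ((n : ℤ) * (m + 1) + k) (Λ.S \ {(n : ℤ) * m + k}) := by
  have hn' : (n : ℤ) ≠ 0 := by omega
  ext t
  have hr₀ := Int.emod_nonneg t hn'
  have hrn := Int.emod_lt_of_pos t (by omega : (0 : ℤ) < n)
  obtain ⟨q, l, hl, rfl⟩ : ∃ (q : ℤ) (l : ℕ), l < n ∧ t = n * q + l :=
    ⟨t / n, (t % n).toNat, by omega, by rw [Int.toNat_of_nonneg hr₀, Int.mul_ediv_add_emod]⟩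
  rcases eq_or_ne l k with rfl | hlk
  · simp only [hq'.mem_S_iff hl, hS, Set.mem_insert_iff, Set.mem_sdiff, Set.mem_singleton_iff,
      hq.mem_S_iff hl, add_left_inj, mul_right_inj' hn']
  · have hne : ∀ q' : ℤ, (n : ℤ) * q + l ≠ n * q' + k := fun q' h => hlk <| by
      simpa only [Int.mul_add_emod_of_lt hl, Int.mul_add_emod_of_lt hk, Nat.cast_inj]
        using congrArg (· % (n : ℤ)) h
    simp only [hq'.mem_S_iff hl, hcomp l hlk, ← hq.mem_S_iff hl, Set.mem_insert_iff, hne,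
      Set.mem_sdiff, Set.mem_singleton_iff, false_or, not_false_eq_true, and_true]

end SlopeQuot

theorem add_box_is_border_strip_general (n k i j : ℕ) (hk : k < n)
    (lam lam' : ℕ → Ptn) (Λ Λ' : Ptn)
    (hq : SlopeQuot n lam Λ) (hq' : SlopeQuot n lam' Λ')
    (hbox : (lam k).f i = j) (hbox' : (lam' k).f i = j + 1)
    (hrow : ∀ r : ℕ, r ≠ i → (lam' k).f r = (lam k).f r)
    (hcomp : ∀ l : ℕ, l ≠ k → lam' l = lam l) :
    IsBorderStrip n (Λ'.cells \ Λ.cells) ∧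
    (∀ c : ℕ, c < n → ∃! x : ℕ × ℕ, x ∈ Λ'.cells \ Λ.cells ∧
        ((x.2 : ℤ) - (x.1 : ℤ)).emod n = c) ∧
    (∃ x ∈ Λ'.cells \ Λ.cells,
        (∀ y ∈ Λ'.cells \ Λ.cells, x.1 ≤ y.1 ∧ y.2 ≤ x.2) ∧
        ((x.2 : ℤ) - (x.1 : ℤ)).emod n = k) ∧
    (∃ x ∈ Λ'.cells \ Λ.cells,
        (x.2 : ℤ) - (x.1 : ℤ) = n * ((j : ℤ) - (i : ℤ))) := by
  have hadd : (lam' k).f i = (lam k).f i + 1 := by rw [hbox, hbox']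
  set m := (lam k).beta i
  have hmji : m = j - i - 1 := by simp only [m, Ptn.beta, hbox]; ring
  have ha : (n : ℤ) * m + k ∈ Λ.S := (hq.mem_S_iff hk m).mpr ((lam k).beta_mem_S i)
  have hb : (n : ℤ) * (m + 1) + k ∉ Λ.S :=
    fun h => (lam k).beta_add_one_notMem_S hadd hrow ((hq.mem_S_iff hk _).mp h)
  have hab : (n : ℤ) * (m + 1) + k = n * m + k + n := by ring
  have hS := hq.S_eq_insert_sdiff hq' hk hcomp ((lam k).S_eq_insert_sdiff_of_add_one hadd hrow)
  rw [Λ.cells_sdiff_eq_image ha hb (by omega) hS, hab]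
  refine ⟨⟨(Set.finite_Ioc _ _).image _, ?_, connectedBoxes_image_Ioc Λ.adj_outerCell_add_one _ _,
    Λ.no2x2_image_outerCell _⟩, fun c hc => ?_, ⟨Λ.outerCell (n * m + k + n), ?_, ?_, ?_⟩,
    ⟨Λ.outerCell (n * (j - i)), ?_, Λ.outerCell_sub _⟩⟩
  · rw [Set.ncard_image_of_injective _ Λ.outerCell_injective, Set.ncard_eq_toFinset_card',
      Set.toFinset_Ioc, Int.card_Ioc]
    omega
  · exact Λ.existsUnique_mem_image_outerCell
      (existsUnique_mem_Ioc_emod_eq (by omega) _ (Int.natCast_nonneg c) (by omega))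
  · exact Set.mem_image_of_mem _ ⟨by omega, le_rfl⟩
  · rintro _ ⟨d, hd, rfl⟩
    exact Λ.outerCell_northeast hd.2
  · rw [Λ.outerCell_sub, ← hab]
    exact Int.mul_add_emod_of_lt hk _
  · have hdiag : (n : ℤ) * (j - i) = n * m + n := by rw [hmji]; ring
    exact Set.mem_image_of_mem _ ⟨by omega, by omega⟩

/-- adding a single box in position `(i,j)` to the component `λ_k` of the
`n`-quotient corresponds to adding a border strip of length `n` to `Λ`; the strip has
exactly one box of each color, its northeastern-most box has color `k`, and its unique
color-0 box lies on the diagonal `s - r = n(j - i)`. -/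
theorem add_box_is_border_strip (n k i j : ℕ) (hn : 0 < n) (hk : k < n)
    (lam lam' : ℕ → Ptn) (Λ Λ' : Ptn)
    (hq : SlopeQuot n lam Λ) (hq' : SlopeQuot n lam' Λ')
    (hbox : (lam k).f i = j) (hbox' : (lam' k).f i = j + 1)
    (hrow : ∀ r : ℕ, r ≠ i → (lam' k).f r = (lam k).f r)
    (hcomp : ∀ l : ℕ, l ≠ k → lam' l = lam l) :
    IsBorderStrip n (Λ'.cells \ Λ.cells) ∧
    (∀ c : ℕ, c < n → ∃! x : ℕ × ℕ, x ∈ Λ'.cells \ Λ.cells ∧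
        ((x.2 : ℤ) - (x.1 : ℤ)).emod n = c) ∧
    (∃ x ∈ Λ'.cells \ Λ.cells,
        (∀ y ∈ Λ'.cells \ Λ.cells, x.1 ≤ y.1 ∧ y.2 ≤ x.2) ∧
        ((x.2 : ℤ) - (x.1 : ℤ)).emod n = k) ∧
    (∃ x ∈ Λ'.cells \ Λ.cells,
        (x.2 : ℤ) - (x.1 : ℤ) = n * ((j : ℤ) - (i : ℤ))) :=
  add_box_is_border_strip_general n k i j hk lam lam' Λ Λ' hq hq' hbox hbox' hrow hcomp
end
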